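/- Assume the valuation setup with sum formula on a field K. Let u = (u₁, u₂) and v = (v₁, v₂) be distinct pairs of elements of K^* with u₁ + u₂ = 1 and v₁ + v₂ = 1. If v_i(u₁) = v_i(v₁) and v_i(u₂) = v_i(v₂) for every i ∈ I, then v_i(u₁) = v_i(u₂) = 0 for every i ∈ I. -/

import Mathlib

/-- A valuation setup with sum formula on a field `K`: for each `i` in the index set `I`, a
map `v i : K → ℤ` which restricts to a group homomorphism `Kˣ → ℤ` satisfying the
ultrametric inequality, with only finitely many `v i` nonzero at each `x ≠ 0`, positive
integer degrees `deg i`, and the sum formula `Σ_i v i x · deg i = 0` for `x ≠ 0`. -/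
structure ValuationSetup (K : Type*) [Field K] (I : Type*) where
  v : I → K → ℤ
  deg : I → ℕ
  deg_pos : ∀ i, 0 < deg i
  v_mul : ∀ i (x y : K), x ≠ 0 → y ≠ 0 → v i (x * y) = v i x + v i y
  v_add : ∀ i (x y : K), x ≠ 0 → y ≠ 0 → x + y ≠ 0 → min (v i x) (v i y) ≤ v i (x + y)
  finite_support : ∀ x : K, x ≠ 0 → {i | v i x ≠ 0}.Finite
  sum_formula : ∀ x : K, x ≠ 0 → ∑ᶠ i, v i x * (deg i : ℤ) = 0

/-- The homogeneous height `H^hom(P) = −Σ_i min{v i (P j) : P j ≠ 0} · deg i` of a (nonzero)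
vector `P`. -/
noncomputable def Hhom {K : Type*} [Field K] {I : Type*} (VS : ValuationSetup K I)
    {m : ℕ} (P : Fin m → K) : ℤ :=
  -∑ᶠ i, sInf ((fun j => VS.v i (P j)) '' {j | P j ≠ 0}) * (VS.deg i : ℤ)
/-
The difference `w = u₁ - v₁ = v₂ - u₂` is nonzero, and the ultrametric inequality gives
`v i u₁ ≤ v i w` and `v i u₂ ≤ v i w` for every `i`. By the sum formula, an inequality
`v i x ≤ v i y` holding at every `i` is an equality everywhere, so `u₁`, `u₂` and `w` have
the same valuations. Then `0 = v i (u₁ + u₂) ≥ v i u₁` for every `i`, and the sum formula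
once more forces `v i u₁ = 0`.
-/

namespace ValuationSetup

variable {K : Type*} [Field K] {I : Type*} (VS : ValuationSetup K I)

lemma v_one (i : I) : VS.v i 1 = 0 := by
  have h := VS.v_mul i 1 1 one_ne_zero one_ne_zero
  rw [one_mul] at h
  omega

lemma v_neg (i : I) {x : K} (hx : x ≠ 0) : VS.v i (-x) = VS.v i x := by
  have h_neg_one : VS.v i (-1 : K) = 0 := by
    have h := VS.v_mul i (-1) (-1) (neg_ne_zero.mpr one_ne_zero) (neg_ne_zero.mpr one_ne_zero)
    rw [neg_one_mul, neg_neg, v_one] at h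
    omega
  rw [← neg_one_mul, VS.v_mul i _ _ (neg_ne_zero.mpr one_ne_zero) hx, h_neg_one, zero_add]

lemma min_le_v_sub (i : I) {x y : K} (hx : x ≠ 0) (hy : y ≠ 0) (hxy : x - y ≠ 0) :
    min (VS.v i x) (VS.v i y) ≤ VS.v i (x - y) := by
  rw [sub_eq_add_neg] at hxy ⊢
  simpa only [VS.v_neg i hy] using VS.v_add i x (-y) hx (neg_ne_zero.mpr hy) hxy

lemma hasFiniteSupport_v_mul_deg {x : K} (hx : x ≠ 0) :
    Function.HasFiniteSupport fun i => VS.v i x * (VS.deg i : ℤ) :=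
  (VS.finite_support x hx).subset (Function.support_mul_subset_left _ _)

lemma v_eq_of_forall_le {x y : K} (hx : x ≠ 0) (hy : y ≠ 0)
    (hle : ∀ i, VS.v i x ≤ VS.v i y) (i : I) : VS.v i x = VS.v i y := by
  by_contra hne
  have hpos : 0 < ∑ᶠ j, (VS.v j y * (VS.deg j : ℤ) - VS.v j x * (VS.deg j : ℤ)) := by
    refine finsum_pos (fun j => ?_) ⟨i, ?_⟩
      ((VS.hasFiniteSupport_v_mul_deg hy).sub (VS.hasFiniteSupport_v_mul_deg hx))
    · rw [← sub_mul]
      exact mul_nonneg (sub_nonneg.mpr (hle j)) (Int.natCast_nonneg _)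
    · rw [← sub_mul]
      exact mul_pos (sub_pos.mpr (lt_of_le_of_ne (hle i) hne)) (by exact_mod_cast VS.deg_pos i)
  rw [finsum_sub_distrib (VS.hasFiniteSupport_v_mul_deg hy) (VS.hasFiniteSupport_v_mul_deg hx),
    VS.sum_formula x hx, VS.sum_formula y hy, sub_zero] at hpos
  exact hpos.false

end ValuationSetup

/-- in the valuation setup, if `u = (u₁, u₂)` and `v = (v₁, v₂)` are distinct
pairs of nonzero elements with `u₁ + u₂ = 1` and `v₁ + v₂ = 1`, and `v i u₁ = v i v₁` and
`v i u₂ = v i v₂` for all `i`, then `v i u₁ = v i u₂ = 0` for all `i`. -/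
theorem valuations_equal_implies_zero {K : Type*} [Field K] {I : Type*}
    (VS : ValuationSetup K I) (u₁ u₂ v₁ v₂ : K)
    (hu₁ : u₁ ≠ 0) (hu₂ : u₂ ≠ 0) (hv₁ : v₁ ≠ 0) (hv₂ : v₂ ≠ 0)
    (husol : u₁ + u₂ = 1) (hvsol : v₁ + v₂ = 1) (hne : (u₁, u₂) ≠ (v₁, v₂))
    (heq : ∀ i, VS.v i u₁ = VS.v i v₁ ∧ VS.v i u₂ = VS.v i v₂) :
    ∀ i, VS.v i u₁ = 0 ∧ VS.v i u₂ = 0 := by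
  have hw : v₂ - u₂ = u₁ - v₁ := by linear_combination hvsol - husol
  have hw_ne : u₁ - v₁ ≠ 0 := by
    refine fun h => hne (Prod.ext (sub_eq_zero.mp h) ?_)
    exact (sub_eq_zero.mp (hw.trans h)).symm
  have hu₁_le_w : ∀ i, VS.v i u₁ ≤ VS.v i (u₁ - v₁) := fun i => by
    simpa only [← (heq i).1, min_self] using VS.min_le_v_sub i hu₁ hv₁ hw_ne
  have hu₂_le_w : ∀ i, VS.v i u₂ ≤ VS.v i (u₁ - v₁) := fun i => by
    simpa only [← (heq i).2, min_self, hw] using VS.min_le_v_sub i hv₂ hu₂ (hw ▸ hw_ne)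
  have hu₁_eq_u₂ : ∀ i, VS.v i u₁ = VS.v i u₂ := fun i =>
    (VS.v_eq_of_forall_le hu₁ hw_ne hu₁_le_w i).trans
      (VS.v_eq_of_forall_le hu₂ hw_ne hu₂_le_w i).symm
  have hu₁_le_one : ∀ i, VS.v i u₁ ≤ VS.v i 1 := fun i => by
    simpa only [← hu₁_eq_u₂ i, min_self, husol] using
      VS.v_add i u₁ u₂ hu₁ hu₂ (husol ▸ one_ne_zero)
  intro i
  have hu₁_zero : VS.v i u₁ = 0 :=
    (VS.v_eq_of_forall_le hu₁ one_ne_zero hu₁_le_one i).trans (VS.v_one i)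
  exact ⟨hu₁_zero, hu₁_eq_u₂ i ▸ hu₁_zero⟩
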